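/- Let q = 2^c, G = SL_2(F_q), U the subgroup of upper unitriangular matrices, B = N_G(U) the Borel subgroup of upper triangular matrices, and H an index-2 subgroup of U. Then for any base of the action of B on the cosets B/H one has size at least c, and Irred(SL_2(F_q), G/H) ≤ c; consequently Base(SL_2(2^c), G/H) = c. -/

import Mathlib

def listStab (G : Type*) {Ω : Type*} [Group G] [MulAction G Ω] (l : List Ω) : Subgroup G :=
  ⨅ ω ∈ l, MulAction.stabilizer G ω

def IsBase (G : Type*) {Ω : Type*} [Group G] [MulAction G Ω] (l : List Ω) : Prop :=
  listStab G l = ⊥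

def IsIrredundant (G : Type*) {Ω : Type*} [Group G] [MulAction G Ω] (l : List Ω) : Prop :=
  ∀ k < l.length, listStab G (l.take (k + 1)) < listStab G (l.take k)

def IsMinimalBase (G : Type*) {Ω : Type*} [Group G] [MulAction G Ω] (l : List Ω) : Prop :=
  IsBase G l ∧ ∀ l' : List Ω, l'.Sublist l → l' ≠ l → ¬ IsBase G l'

def IsIndependentSeq (G : Type*) {Ω : Type*} [Group G] [MulAction G Ω] (l : List Ω) : Prop :=
  ∀ k < l.length, listStab G (l.eraseIdx k) ≠ listStab G l

noncomputable def minBaseSize (G Ω : Type*) [Group G] [MulAction G Ω] : ℕ∞ :=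
  sInf {n : ℕ∞ | ∃ l : List Ω, IsBase G l ∧ (l.length : ℕ∞) = n}

noncomputable def maxMinBase (G Ω : Type*) [Group G] [MulAction G Ω] : ℕ∞ :=
  sSup {n : ℕ∞ | ∃ l : List Ω, IsMinimalBase G l ∧ (l.length : ℕ∞) = n}

noncomputable def heightStat (G Ω : Type*) [Group G] [MulAction G Ω] : ℕ∞ :=
  sSup {n : ℕ∞ | ∃ l : List Ω, IsIndependentSeq G l ∧ (l.length : ℕ∞) = n}

noncomputable def irredStat (G Ω : Type*) [Group G] [MulAction G Ω] : ℕ∞ :=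
  sSup {n : ℕ∞ | ∃ l : List Ω, IsIrredundant G l ∧ (l.length : ℕ∞) = n}

/-
`U ≅ (𝔽_q, +)` has order `2^c`. For `b` normalizing `U`, the stabilizer of the point `bH` meets `U`
in `bHb⁻¹`, of index 2 in `U`; intersecting `l` such subgroups leaves index at most `2^l` in `U`,
so a base made of such points has at least `c` of them. On the other hand every point stabilizer of
`G` on `G/H` is conjugate to `H`, of order `2^(c-1)`, and each step of an irredundant chain at least
halves the stabilizer, so irredundant sequences (in particular minimal bases) have at most `c`
points. Finally, conjugation by `diag(a, a⁻¹)` rescales `U` by `a²`, which runs through all of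
`𝔽_q^×` in characteristic 2; since `H ≠ U`, the points `diag(a, a⁻¹) H` have trivial common
stabilizer, and a minimal base extracted from them has exactly `c` points.
-/

open MulAction Subgroup MatrixGroups Matrix.SpecialLinearGroup

namespace Subgroup

variable {G : Type*} [Group G]

theorem card_mul_relIndex {H K : Subgroup G} (h : H ≤ K) :
    Nat.card H * H.relIndex K = Nat.card K := by
  rw [← Nat.card_congr (subgroupOfEquivOfLe h).toEquiv]
  exact card_mul_index (H.subgroupOf K)

theorem two_mul_card_le_of_lt [Finite G] {H K : Subgroup G} (h : H < K) :
    2 * Nat.card H ≤ Nat.card K := by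
  have hmul := card_mul_relIndex h.le
  have hne_one : H.relIndex K ≠ 1 := fun h1 => h.not_ge (relIndex_eq_one.1 h1)
  have hne_zero : H.relIndex K ≠ 0 := fun h0 => by
    rw [h0, mul_zero] at hmul
    exact Nat.card_pos.ne' hmul.symm
  calc 2 * Nat.card H ≤ H.relIndex K * Nat.card H := Nat.mul_le_mul_right _ (by omega)
    _ = Nat.card K := by rw [mul_comm, hmul]

end Subgroup

namespace MulAction

variable {G : Type*} [Group G]

theorem mem_stabilizer_quotientMk_iff (K : Subgroup G) (g x : G) :
    x ∈ stabilizer G (g : G ⧸ K) ↔ g⁻¹ * x * g ∈ K := by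
  rw [mem_stabilizer_iff, show x • (g : G ⧸ K) = ((x * g : G) : G ⧸ K) from rfl, QuotientGroup.eq,
    show (x * g)⁻¹ * g = (g⁻¹ * x * g)⁻¹ by group, inv_mem_iff]

theorem stabilizer_quotientMk (K : Subgroup G) (g : G) :
    stabilizer G (g : G ⧸ K) = K.map (MulAut.conj g).toMonoidHom := by
  conv_rhs => rw [← stabilizer_quotient K]
  rw [← stabilizer_smul_eq_stabilizer_map_conj, Quotient.smul_coe, smul_eq_mul, mul_one]

theorem natCard_stabilizer_quotientMk (K : Subgroup G) (g : G) :
    Nat.card (stabilizer G (g : G ⧸ K)) = Nat.card K := by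
  rw [stabilizer_quotientMk, card_map_of_injective (MulAut.conj g).injective]

theorem relIndex_stabilizer_quotientMk {K V : Subgroup G} {g : G}
    (hg : g ∈ normalizer (V : Set G)) :
    (stabilizer G (g : G ⧸ K)).relIndex V = K.relIndex V := by
  conv_lhs => rw [stabilizer_quotientMk, ← mem_normalizer_iff_map_conj_eq.1 hg]
  exact relIndex_map_map_of_injective _ _ (MulAut.conj g).injective

end MulAction

section Bases

variable {G Ω : Type*} [Group G] [MulAction G Ω]

theorem mem_listStab {l : List Ω} {g : G} :
    g ∈ listStab G l ↔ ∀ x ∈ l, g ∈ stabilizer G x := by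
  simp [listStab, mem_iInf]

theorem listStab_nil : listStab G ([] : List Ω) = ⊤ := by
  ext; simp [mem_listStab]

theorem listStab_cons (x : Ω) (l : List Ω) :
    listStab G (x :: l) = stabilizer G x ⊓ listStab G l := by
  ext; simp [mem_listStab]

theorem listStab_singleton (x : Ω) : listStab G [x] = stabilizer G x := by
  rw [listStab_cons, listStab_nil, inf_top_eq]

theorem listStab_append (l₁ l₂ : List Ω) :
    listStab G (l₁ ++ l₂) = listStab G l₁ ⊓ listStab G l₂ := by
  ext; simp [mem_listStab, or_imp, forall_and]

theorem IsMinimalBase.isIrredundant {l : List Ω} (h : IsMinimalBase G l) : IsIrredundant G l := by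
  intro k hk
  refine lt_of_le_of_ne ?_ fun heq => ?_
  · rw [List.take_add_one, listStab_append]
    exact inf_le_left
  -- a point whose stabilizer already contains that of its predecessors can be dropped
  have hstab : listStab G (l.take k) ≤ stabilizer G l[k] := by
    rw [← heq, List.take_add_one, List.getElem?_eq_getElem hk, Option.toList_some, listStab_append,
      listStab_singleton]
    exact inf_le_right
  have herase : listStab G (l.eraseIdx k) = listStab G l := by
    conv_rhs => rw [← List.take_append_drop k l, List.drop_eq_getElem_cons hk]
    rw [List.eraseIdx_eq_take_drop_succ, listStab_append, listStab_append, listStab_cons,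
      ← inf_assoc, inf_eq_left.2 hstab]
  refine h.2 _ (List.eraseIdx_sublist l k) (fun hl => ?_) (herase.trans h.1)
  have := congrArg List.length hl
  rw [List.length_eraseIdx_of_lt hk] at this
  omega

theorem IsBase.exists_isMinimalBase_sublist {l : List Ω} (h : IsBase G l) :
    ∃ l', l'.Sublist l ∧ IsMinimalBase G l' := by
  induction hn : l.length using Nat.strong_induction_on generalizing l with
  | _ n ih =>
    by_cases hmin : IsMinimalBase G l
    · exact ⟨l, List.Sublist.refl l, hmin⟩
    obtain ⟨l', hsub, hne, hbase⟩ : ∃ l', l'.Sublist l ∧ l' ≠ l ∧ IsBase G l' := by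
      simpa [IsMinimalBase, h] using hmin
    have hlt : l'.length < n := hn ▸ lt_of_le_of_ne hsub.length_le (mt hsub.eq_of_length hne)
    obtain ⟨l'', hsub', hmin'⟩ := ih _ hlt hbase rfl
    exact ⟨l'', hsub'.trans hsub, hmin'⟩

theorem maxMinBase_le_irredStat : maxMinBase G Ω ≤ irredStat G Ω :=
  sSup_le_sSup fun _ ⟨l, hl, hlen⟩ => ⟨l, hl.isIrredundant, hlen⟩

theorem exists_isMinimalBase_forall_mem_range {ι : Type*} [Finite ι] (p : ι → Ω)
    (h : ∀ g : G, (∀ i, g ∈ stabilizer G (p i)) → g = 1) :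
    ∃ l, IsMinimalBase G l ∧ ∀ x ∈ l, x ∈ Set.range p := by
  obtain ⟨L, -, hL⟩ := Finite.exists_univ_list ι
  have hbase : IsBase G (L.map p) := (eq_bot_iff_forall _).2 fun g hg =>
    h g fun i => mem_listStab.1 hg _ (List.mem_map_of_mem (hL i))
  obtain ⟨l, hsub, hmin⟩ := hbase.exists_isMinimalBase_sublist
  refine ⟨l, hmin, fun x hx => ?_⟩
  obtain ⟨i, -, rfl⟩ := List.mem_map.1 (hsub.subset hx)
  exact ⟨i, rfl⟩

theorem relIndex_listStab_le (V : Subgroup G) {l : List Ω}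
    (h : ∀ x ∈ l, (stabilizer G x).relIndex V ≤ 2) :
    (listStab G l).relIndex V ≤ 2 ^ l.length := by
  induction l with
  | nil => simp [listStab_nil, relIndex_top_left]
  | cons x t ih =>
    rw [listStab_cons, List.length_cons, pow_succ']
    exact relIndex_inf_le.trans <| Nat.mul_le_mul (h x List.mem_cons_self)
      (ih fun y hy => h y (List.mem_cons_of_mem x hy))

theorem IsBase.le_length {l : List Ω} (hl : IsBase G l) (V : Subgroup G) {c : ℕ}
    (hV : Nat.card V = 2 ^ c) (h : ∀ x ∈ l, (stabilizer G x).relIndex V ≤ 2) :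
    c ≤ l.length := by
  have := relIndex_listStab_le V h
  rw [show listStab G l = ⊥ from hl, relIndex_bot_left, hV] at this
  exact (Nat.pow_le_pow_iff_right one_lt_two).1 this

theorem IsBase.le_length_of_mem_normalizer {G : Type*} [Group G] {H U : Subgroup G} {c : ℕ}
    (hU : Nat.card U = 2 ^ c) (hHU : H.relIndex U ≤ 2) {l : List (G ⧸ H)} (hl : IsBase G l)
    (hnorm : ∀ x ∈ l, ∃ g ∈ normalizer (U : Set G), (g : G ⧸ H) = x) : c ≤ l.length :=
  hl.le_length U hU fun x hx => by
    obtain ⟨g, hg, rfl⟩ := hnorm x hx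
    rwa [relIndex_stabilizer_quotientMk hg]

theorem IsBase.le_length_of_le_normalizer {G : Type*} [Group G] {H U B : Subgroup G} {c : ℕ}
    (hU : Nat.card U = 2 ^ c) (hHU : H.relIndex U ≤ 2) (hUB : U ≤ B)
    (hBU : B ≤ normalizer (U : Set G)) {l : List (B ⧸ H.subgroupOf B)} (hl : IsBase B l) :
    c ≤ l.length := by
  have : (U.subgroupOf B).Normal := (normal_subgroupOf_iff_le_normalizer hUB).2 hBU
  refine hl.le_length_of_mem_normalizer
    ((Nat.card_congr (subgroupOfEquivOfLe hUB).toEquiv).trans hU)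
    (by rwa [relIndex_subgroupOf hUB]) fun x _ => ?_
  obtain ⟨b, rfl⟩ := QuotientGroup.mk_surjective x
  exact ⟨b, by simp only [normalizer_eq_top, mem_top], rfl⟩

theorem IsIrredundant.two_pow_le_card_listStab_take [Finite G] {l : List Ω}
    (hl : IsIrredundant G l) {i j : ℕ} (hij : i + j ≤ l.length) :
    2 ^ j ≤ Nat.card (listStab G (l.take i)) := by
  induction j generalizing i with
  | zero => exact Nat.card_pos
  | succ j ih =>
    calc 2 ^ (j + 1) = 2 * 2 ^ j := pow_succ' 2 j
      _ ≤ 2 * Nat.card (listStab G (l.take (i + 1))) := Nat.mul_le_mul_left 2 (ih (by omega))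
      _ ≤ Nat.card (listStab G (l.take i)) := two_mul_card_le_of_lt (hl i (by omega))

theorem IsIrredundant.length_le [Finite G] {l : List Ω} (hl : IsIrredundant G l) {k : ℕ}
    (h : ∀ x : Ω, Nat.card (stabilizer G x) ≤ 2 ^ k) : l.length ≤ k + 1 := by
  cases l with
  | nil => exact Nat.zero_le _
  | cons x t =>
    have := (hl.two_pow_le_card_listStab_take (i := 1) (j := t.length) (by simp [add_comm])).trans
      (by simpa [listStab_singleton] using h x)
    rw [List.length_cons, add_le_add_iff_right]
    exact (Nat.pow_le_pow_iff_right one_lt_two).1 this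

theorem irredStat_le [Finite G] {k : ℕ} (h : ∀ x : Ω, Nat.card (stabilizer G x) ≤ 2 ^ k) :
    irredStat G Ω ≤ (k + 1 : ℕ) :=
  sSup_le fun _ ⟨_, hl, hlen⟩ => hlen ▸ Nat.cast_le.2 (hl.length_le h)

end Bases

namespace Matrix.SpecialLinearGroup

variable {F : Type*} [Field F]

theorem coe_transvection_zero_one (t : F) :
    (transvection (zero_ne_one' (Fin 2)) t : Matrix (Fin 2) (Fin 2) F) = !![1, t; 0, 1] := by
  ext i j
  fin_cases i <;> fin_cases j <;> simp [transvection_coe]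

theorem transvection_injective :
    Function.Injective (transvection (zero_ne_one' (Fin 2)) : F → SL(2, F)) := fun s t h => by
  simpa [transvection_coe] using congrArg (fun g : SL(2, F) => (g : Matrix (Fin 2) (Fin 2) F) 0 1) h

theorem exists_transvection_eq_iff (g : SL(2, F)) :
    (∃ t, transvection (zero_ne_one' (Fin 2)) t = g) ↔
      (g : Matrix (Fin 2) (Fin 2) F) 1 0 = 0 ∧ (g : Matrix (Fin 2) (Fin 2) F) 0 0 = 1 := by
  constructor
  · rintro ⟨t, rfl⟩
    simp [transvection_coe]
  · rintro ⟨h10, h00⟩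
    have h11 : (g : Matrix (Fin 2) (Fin 2) F) 1 1 = 1 := by
      have hdet := g.2
      rwa [det_fin_two, h10, h00, one_mul, mul_zero, sub_zero] at hdet
    refine ⟨(g : Matrix (Fin 2) (Fin 2) F) 0 1, Subtype.ext ?_⟩
    ext i j
    fin_cases i <;> fin_cases j <;> simp [transvection_coe, h10, h00, h11]

theorem diag2_one : diag2 (1 : F) one_ne_zero = 1 := by
  ext i j
  fin_cases i <;> fin_cases j <;> simp [diag2_coe']

theorem inv_diag2_mul_transvection_mul_diag2 {a : F} (ha : a ≠ 0) (t : F) :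
    (diag2 a ha)⁻¹ * transvection (zero_ne_one' (Fin 2)) t * diag2 a ha =
      transvection (zero_ne_one' (Fin 2)) (t / a ^ 2) := by
  rw [diag2_inv]
  ext i j
  fin_cases i <;> fin_cases j <;>
    simp [diag2_coe', coe_transvection_zero_one] <;> field_simp

theorem natCard_eq_of_mem_iff_exists_transvection {U : Subgroup SL(2, F)}
    (hU : ∀ g, g ∈ U ↔ ∃ t, transvection (zero_ne_one' (Fin 2)) t = g) :
    Nat.card U = Nat.card F :=
  Nat.card_congr <| Equiv.symm <| Equiv.ofBijective
    (fun t => ⟨transvection (zero_ne_one' (Fin 2)) t, (hU _).2 ⟨t, rfl⟩⟩)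
    ⟨fun _ _ h => transvection_injective (congrArg Subtype.val h),
      fun g => ((hU g).1 g.2).imp fun _ ht => Subtype.ext ht⟩

theorem eq_one_of_forall_mem_stabilizer_diag2 [ExpChar F 2] [PerfectRing F 2]
    {H : Subgroup SL(2, F)} (hH : ∀ h ∈ H, ∃ t, transvection (zero_ne_one' (Fin 2)) t = h)
    {s : F} (hs : transvection (zero_ne_one' (Fin 2)) s ∉ H) {g : SL(2, F)}
    (hg : ∀ a : Fˣ, g ∈ stabilizer SL(2, F) ((diag2 (a : F) a.ne_zero : SL(2, F)) : SL(2, F) ⧸ H)) :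
    g = 1 := by
  have hgH : g ∈ H := by
    simpa [mem_stabilizer_quotientMk_iff, diag2_one] using hg 1
  obtain ⟨t, rfl⟩ := hH g hgH
  by_contra ht1
  have ht : t ≠ 0 := by rintro rfl; exact ht1 (transvection_coeff_zero _)
  obtain ⟨y, hy⟩ := surjective_frobenius F 2 (t / s)
  rw [frobenius_def] at hy
  have hs0 : s ≠ 0 := by rintro rfl; exact hs (by simp [H.one_mem])
  have hy0 : y ≠ 0 := by
    rintro rfl
    exact div_ne_zero ht hs0 (by simpa using hy.symm)
  have := (mem_stabilizer_quotientMk_iff _ _ _).1 (hg (Units.mk0 y hy0))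
  rw [inv_diag2_mul_transvection_mul_diag2, Units.val_mk0, hy, div_div_cancel₀ ht] at this
  exact hs this

end Matrix.SpecialLinearGroup

/-- for `q = 2^c`, `G = SL_2(F_q)`, `U` the upper unitriangular subgroup,
`B` the Borel subgroup of upper triangular matrices (the normalizer of `U`), and `H ≤ U`
of index 2: every base for the action of `B` on `B/H` has size at least `c`,
`Irred(G, G/H) ≤ c`, and consequently `Base(G, G/H) = c`. -/
theorem stmt_9 (c : ℕ) (hc : 1 < c)
    (U B H : Subgroup (Matrix.SpecialLinearGroup (Fin 2) (GaloisField 2 c)))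
    (hU : ∀ g : Matrix.SpecialLinearGroup (Fin 2) (GaloisField 2 c),
      g ∈ U ↔ ((g : Matrix (Fin 2) (Fin 2) (GaloisField 2 c)) 1 0 = 0 ∧
        (g : Matrix (Fin 2) (Fin 2) (GaloisField 2 c)) 0 0 = 1))
    (hB : ∀ g : Matrix.SpecialLinearGroup (Fin 2) (GaloisField 2 c),
      g ∈ B ↔ (g : Matrix (Fin 2) (Fin 2) (GaloisField 2 c)) 1 0 = 0)
    (hBU : B = Subgroup.normalizer (U : Set (Matrix.SpecialLinearGroup (Fin 2) (GaloisField 2 c))))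
    (hHU : H ≤ U) (hidx : H.relIndex U = 2) :
    (∀ l : List (B ⧸ H.subgroupOf B), IsBase B l → c ≤ l.length) ∧
    irredStat (Matrix.SpecialLinearGroup (Fin 2) (GaloisField 2 c))
      (Matrix.SpecialLinearGroup (Fin 2) (GaloisField 2 c) ⧸ H) ≤ (c : ℕ∞) ∧
    maxMinBase (Matrix.SpecialLinearGroup (Fin 2) (GaloisField 2 c))
      (Matrix.SpecialLinearGroup (Fin 2) (GaloisField 2 c) ⧸ H) = (c : ℕ∞) := by
  have hU' : ∀ g, g ∈ U ↔ ∃ t, transvection (zero_ne_one' (Fin 2)) t = g := fun g =>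
    (hU g).trans (exists_transvection_eq_iff g).symm
  have cardU : Nat.card U = 2 ^ c :=
    (natCard_eq_of_mem_iff_exists_transvection hU').trans (GaloisField.card 2 c (by omega))
  have cardH : Nat.card H = 2 ^ (c - 1) := by
    have h := card_mul_relIndex hHU
    rw [hidx, cardU] at h
    have h2 : 2 ^ c = 2 ^ (c - 1) * 2 := by rw [← pow_succ, Nat.sub_add_cancel hc.le]
    omega
  have hstab : ∀ x : SL(2, GaloisField 2 c) ⧸ H,
      Nat.card (stabilizer SL(2, GaloisField 2 c) x) ≤ 2 ^ (c - 1) := by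
    rintro ⟨g⟩
    exact (natCard_stabilizer_quotientMk H g).trans_le cardH.le
  have hirred : irredStat SL(2, GaloisField 2 c) (SL(2, GaloisField 2 c) ⧸ H) ≤ c := by
    simpa [Nat.sub_add_cancel hc.le] using irredStat_le hstab
  have hUB : U ≤ B := hBU ▸ le_normalizer
  refine ⟨fun l hl => ?_, hirred, le_antisymm (maxMinBase_le_irredStat.trans hirred) ?_⟩
  · exact hl.le_length_of_le_normalizer cardU hidx.le hUB hBU.le
  · obtain ⟨u, huU, huH⟩ := SetLike.not_le_iff_exists.1
      (fun h => by simp [relIndex_eq_one.2 h] at hidx : ¬U ≤ H)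
    obtain ⟨s, rfl⟩ := (hU' u).1 huU
    obtain ⟨l, hmin, hl⟩ := exists_isMinimalBase_forall_mem_range
      (fun a : (GaloisField 2 c)ˣ => ((diag2 (a : GaloisField 2 c) a.ne_zero :
        SL(2, GaloisField 2 c)) : SL(2, GaloisField 2 c) ⧸ H))
      fun g => eq_one_of_forall_mem_stabilizer_diag2 (fun h hh => (hU' h).1 (hHU hh)) huH
    have hcl : c ≤ l.length := hmin.1.le_length_of_mem_normalizer cardU hidx.le fun x hx => by
      obtain ⟨a, rfl⟩ := hl x hx
      exact ⟨_, hBU ▸ (hB _).2 (by simp [diag2_coe']), rfl⟩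
    have hlc : l.length ≤ c := by
      simpa [Nat.sub_add_cancel hc.le] using hmin.isIrredundant.length_le hstab
    exact le_sSup ⟨l, hmin, by rw [le_antisymm hlc hcl]⟩
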